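/- arXiv:1401.5112 — 3 statements merged into one kernel-verified Lean document; each statement's English description precedes it below -/
import Mathlib

section
/- Let n ≥ 1, let m : Fin n → ℝ with m_k > 0 for all k, let r : Fin n → ℝ, and let θ > 0. Set a_k = exp(r_k), ρⁿ = ∑_j m_j a_j, Y_k = m_k a_k / ρⁿ, and π_m = θ ∑_j a_j. Then the matrix D̂ with entries D̂_{kl} = θ C(Y)_{kl} a_l / (π_m m_k) is symmetric and positive semidefinite. -/
/-
With `a k = exp (r k)`, `S = ∑ a`, `ρ = ∑ m a`, the identity `∑ Y = 1` turns `C(Y)` into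
`I - Y 1ᵀ`, so that `D̂ = S⁻¹ • (diagonal (a / m) - ρ⁻¹ • a aᵀ)`. This matrix is visibly
symmetric, and its quadratic form `∑ a_k x_k² / m_k - (∑ a_k x_k)² / ρ` is nonnegative by the
Cauchy–Schwarz inequality in Sedrakyan's form, applied to `a_k x_k` with weights `m_k a_k`.
-/

open scoped BigOperators

/-- The Maxwell–Stefan mixture diffusion matrix: diagonal entries `∑_{i ≠ k} Y i`,
off-diagonal entries `-Y k`. -/
noncomputable def mixC {n : ℕ} (Y : Fin n → ℝ) : Matrix (Fin n) (Fin n) ℝ :=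
  Matrix.of fun k l => if k = l then ∑ i ∈ Finset.univ.erase k, Y i else -Y k

/-- The matrix `D̂_{kl} = θ C(Y)_{kl} e^{r_l} / (π_m m_k)` from the Galerkin-level
species equations, where `a_k = e^{r_k}`, `Y_k = m_k a_k / ∑_j m_j a_j` and
`π_m = θ ∑_j a_j`. -/
noncomputable def Dhat {n : ℕ} (m r : Fin n → ℝ) (θ : ℝ) : Matrix (Fin n) (Fin n) ℝ :=
  Matrix.of fun k l =>
    θ * mixC (fun i => m i * Real.exp (r i) / ∑ j, m j * Real.exp (r j)) k l
        * Real.exp (r l) / ((θ * ∑ j, Real.exp (r j)) * m k)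

open Matrix Finset

theorem Matrix.posSemidef_diagonal_div_sub_smul_vecMulVec {ι : Type*} [Fintype ι]
    [DecidableEq ι] {m a : ι → ℝ} (hm : ∀ k, 0 < m k) (ha : ∀ k, 0 < a k) :
    (diagonal (fun k => a k / m k) - (∑ j, m j * a j)⁻¹ • vecMulVec a a).PosSemidef := by
  have hvec : (vecMulVec a a).IsHermitian := by
    simpa using (posSemidef_vecMulVec_self_star a).isHermitian
  refine .of_dotProduct_mulVec_nonneg ((isHermitian_diagonal _).sub (hvec.smul (.all _)))
    fun x => ?_
  have sedrakyan := sq_sum_div_le_sum_sq_div univ (fun k => a k * x k)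
    (g := fun k => m k * a k) fun k _ => mul_pos (hm k) (ha k)
  have hquad :
      x ⬝ᵥ ((diagonal (fun k => a k / m k) - (∑ j, m j * a j)⁻¹ • vecMulVec a a) *ᵥ x) =
        ∑ k, (a k * x k) ^ 2 / (m k * a k) - (a ⬝ᵥ x) ^ 2 / ∑ k, m k * a k := by
    rw [sub_mulVec, dotProduct_sub, smul_mulVec, vecMulVec_mulVec, dotProduct_smul,
      dotProduct_smul]
    congr 1
    · simp only [mulVec_diagonal, dotProduct]
      exact sum_congr rfl fun k _ => by field_simp [(hm k).ne', (ha k).ne']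
    · rw [op_smul_eq_mul, smul_eq_mul, dotProduct_comm x a]
      ring
  rw [star_trivial, hquad, sub_nonneg]
  exact sedrakyan

theorem mixC_apply {n : ℕ} (Y : Fin n → ℝ) (k l : Fin n) :
    mixC Y k l = (if k = l then ∑ i, Y i else 0) - Y k := by
  rw [mixC, of_apply]
  split_ifs with h
  · rw [h, sum_erase_eq_sub (mem_univ l)]
  · rw [zero_sub]

theorem Dhat_eq {n : ℕ} {m : Fin n → ℝ} (hm : ∀ k, 0 < m k) (r : Fin n → ℝ) {θ : ℝ}
    (hθ : θ ≠ 0) :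
    Dhat m r θ = (∑ j, Real.exp (r j))⁻¹ • (diagonal (fun k => Real.exp (r k) / m k) -
      (∑ j, m j * Real.exp (r j))⁻¹ •
        vecMulVec (fun k => Real.exp (r k)) fun k => Real.exp (r k)) := by
  ext k l
  have : Nonempty (Fin n) := ⟨k⟩
  have hS : 0 < ∑ j, Real.exp (r j) := sum_pos (fun j _ => Real.exp_pos _) univ_nonempty
  have hρ : 0 < ∑ j, m j * Real.exp (r j) :=
    sum_pos (fun j _ => mul_pos (hm j) (Real.exp_pos _)) univ_nonempty
  have hY : ∑ i, m i * Real.exp (r i) / ∑ j, m j * Real.exp (r j) = 1 := by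
    rw [← sum_div, div_self hρ.ne']
  rw [Dhat, of_apply, mixC_apply, hY]
  simp only [Matrix.smul_apply, Matrix.sub_apply, diagonal_apply, vecMulVec_apply, smul_eq_mul]
  have hmk := (hm k).ne'
  split_ifs with h
  · subst h
    field_simp
  · field_simp
    ring

theorem stmt4_general {n : ℕ} (m r : Fin n → ℝ)
    (hm : ∀ k, 0 < m k) (θ : ℝ) (hθ : 0 < θ) :
    (Dhat m r θ).IsSymm ∧ (Dhat m r θ).PosSemidef := by
  have hpsd : (Dhat m r θ).PosSemidef := by
    rw [Dhat_eq hm r hθ.ne']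
    exact (posSemidef_diagonal_div_sub_smul_vecMulVec hm fun k => Real.exp_pos (r k)).smul
      (by positivity)
  exact ⟨isHermitian_iff_isSymm.mp hpsd.isHermitian, hpsd⟩

/-- The matrix `D̂` is symmetric and positive semidefinite. -/
theorem stmt4 {n : ℕ} (hn : 1 ≤ n) (m r : Fin n → ℝ)
    (hm : ∀ k, 0 < m k) (θ : ℝ) (hθ : 0 < θ) :
    (Dhat m r θ).IsSymm ∧ (Dhat m r θ).PosSemidef :=
  stmt4_general m r hm θ hθ
end

section
/- Let n ≥ 1, let m : Fin n → ℝ with m_k > 0 for all k, let r : Fin n → ℝ, and let θ > 0. Set a_k = exp(r_k), ρⁿ = ∑_j m_j a_j, Y_k = m_k a_k / ρⁿ, π_m = θ ∑_j a_j, and D̂_{kl} = θ C(Y)_{kl} a_l / (π_m m_k). Then every entry of D̂ is bounded in absolute value: |D̂_{kl}| ≤ 1 / (min_k m_k) for all k, l. -/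
open scoped BigOperators

/-!
Writing `a = exp ∘ r`, `D̂_{kl} = (θ / θ) · C(Y)_{kl} · (a_l / ∑_j a_j) / m_k`, where
`θ / θ ∈ {0, 1}` (it is `0` when `θ = 0`).
Since `Y` is a vector of mass fractions (nonnegative, summing to at most one), every entry of
`C(Y)` is a partial sum of `Y` up to sign, hence at most one in absolute value, and
`a_l / ∑_j a_j ≤ 1` as well. So `|D̂_{kl}| ≤ 1 / m_k ≤ 1 / min_k m_k`.
-/

open Finset

theorem abs_mixC_le_one {n : ℕ} {Y : Fin n → ℝ} (hY : ∀ i, 0 ≤ Y i) (hsum : ∑ i, Y i ≤ 1)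
    (k l : Fin n) : |mixC Y k l| ≤ 1 := by
  simp only [mixC, Matrix.of_apply]
  split_ifs
  · rw [abs_of_nonneg (sum_nonneg fun i _ => hY i)]
    exact (sum_le_sum_of_subset_of_nonneg (erase_subset k univ) fun i _ _ => hY i).trans hsum
  · rw [abs_neg, abs_of_nonneg (hY k)]
    exact (single_le_sum (fun i _ => hY i) (mem_univ k)).trans hsum

theorem abs_mixC_div_sum_le_one {n : ℕ} {x : Fin n → ℝ} (hx : ∀ i, 0 ≤ x i) (k l : Fin n) :
    |mixC (fun i => x i / ∑ j, x j) k l| ≤ 1 :=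
  abs_mixC_le_one (fun i => div_nonneg (hx i) (sum_nonneg fun j _ => hx j))
    (by rw [← sum_div]; exact div_self_le_one _) k l

theorem div_sum_le_one_of_nonneg {ι : Type*} [Fintype ι] {x : ι → ℝ} (hx : ∀ i, 0 ≤ x i)
    (i : ι) : x i / ∑ j, x j ≤ 1 :=
  div_le_one_of_le₀ (single_le_sum (fun j _ => hx j) (mem_univ i)) (sum_nonneg fun j _ => hx j)

theorem Dhat_apply_eq {n : ℕ} (m r : Fin n → ℝ) (θ : ℝ) (k l : Fin n) :
    Dhat m r θ k l = θ / θ * (mixC (fun i => m i * Real.exp (r i) / ∑ j, m j * Real.exp (r j)) k l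
      * (Real.exp (r l) / ∑ j, Real.exp (r j))) / m k := by
  simp only [Dhat, Matrix.of_apply, mul_assoc, mul_div_mul_comm θ, mul_div_assoc]
  rw [div_div]

theorem stmt5_general {n : ℕ} (m r : Fin n → ℝ)
    (hm : ∀ k, 0 < m k) (θ : ℝ) :
    ∀ k l : Fin n,
      |Dhat m r θ k l| ≤ 1 / Finset.univ.inf' ⟨k, Finset.mem_univ k⟩ m := by
  intro k l
  have hmin : 0 < univ.inf' ⟨k, mem_univ k⟩ m := (lt_inf'_iff _).2 fun i _ => hm i
  have hC := abs_mixC_div_sum_le_one (fun i => mul_nonneg (hm i).le (Real.exp_pos (r i)).le) k l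
  have ha := div_sum_le_one_of_nonneg (fun j => (Real.exp_pos (r j)).le) l
  set C := mixC (fun i => m i * Real.exp (r i) / ∑ j, m j * Real.exp (r j)) k l
  calc |Dhat m r θ k l|
      = |θ / θ| * (|C| * (Real.exp (r l) / ∑ j, Real.exp (r j))) / m k := by
        rw [Dhat_apply_eq, abs_div _ (m k), abs_mul, abs_mul, abs_of_pos (hm k),
          abs_of_nonneg (by positivity : 0 ≤ Real.exp (r l) / ∑ j, Real.exp (r j))]
    _ ≤ 1 / m k := by
        refine div_le_div_of_nonneg_right ?_ (hm k).le
        refine mul_le_one₀ ?_ (by positivity) (mul_le_one₀ hC (by positivity) ha)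
        rw [abs_div]
        exact div_self_le_one _
    _ ≤ 1 / univ.inf' ⟨k, mem_univ k⟩ m := one_div_le_one_div_of_le hmin (inf'_le m (mem_univ k))

/-- Every entry of `D̂` is bounded in absolute value by `1 / min_k m_k`. -/
theorem stmt5 {n : ℕ} (hn : 1 ≤ n) (m r : Fin n → ℝ)
    (hm : ∀ k, 0 < m k) (θ : ℝ) (hθ : 0 < θ) :
    ∀ k l : Fin n,
      |Dhat m r θ k l| ≤ 1 / Finset.univ.inf' ⟨k, Finset.mem_univ k⟩ m :=
  stmt5_general m r hm θ
end

section
/- Let n ≥ 1, let m : Fin n → ℝ with m_k > 0 for all k, let r : Fin n → ℝ, and let θ > 0. Set a_k = exp(r_k), ρⁿ = ∑_j m_j a_j, Y_k = m_k a_k / ρⁿ, π_m = θ ∑_j a_j, and D̂_{kl} = θ C(Y)_{kl} a_l / (π_m m_k). Then for every family of vectors v : Fin n → ℝ³ one has the identity ∑_{k,l} D̂_{kl} ⟨v_k, v_l⟩ = ∑_{k} (m_k (∑_j a_j) / a_k) · ‖∑_{l} D̂_{kl} v_l‖². Equivalently, setting F_k := −C₀ m_k ∑_l D̂_{kl} v_l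 for any C₀ > 0, one has C₀ ∑_{k,l} D̂_{kl} ⟨v_k, v_l⟩ = (π_m/(C₀ θ)) ∑_k ‖F_k‖² / (m_k a_k). -/
open scoped BigOperators RealInnerProductSpace

section WeightedIdempotent

variable {ι E : Type*} [Fintype ι] [NormedAddCommGroup E] [InnerProductSpace ℝ E]

theorem sum_smul_sum_smul_of_isIdempotentElem {C : Matrix ι ι ℝ} (hC : IsIdempotentElem C)
    (u : ι → E) (k : ι) : ∑ l, C k l • ∑ j, C l j • u j = ∑ j, C k j • u j := by
  simp_rw [Finset.smul_sum, smul_smul]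
  rw [Finset.sum_comm]
  simp_rw [← Finset.sum_smul, ← Matrix.mul_apply, hC.eq]

theorem sum_mul_inner_eq_sum_mul_norm_sq_of_isIdempotentElem {C : Matrix ι ι ℝ}
    (hC : IsIdempotentElem C) {w : ι → ℝ} (hw : ∀ k l, w k * C k l = w l * C l k) (u : ι → E) :
    ∑ k, w k * ⟪u k, ∑ l, C k l • u l⟫ = ∑ k, w k * ‖∑ l, C k l • u l‖ ^ 2 := by
  set Cu : ι → E := fun k => ∑ l, C k l • u l
  calc ∑ k, w k * ⟪u k, Cu k⟫
      = ∑ k, w k * ⟪u k, ∑ l, C k l • Cu l⟫ := by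
        simp only [Cu, sum_smul_sum_smul_of_isIdempotentElem hC]
    _ = ∑ k, ∑ l, w l * C l k * ⟪u k, Cu l⟫ := by
        simp_rw [inner_sum, real_inner_smul_right, Finset.mul_sum, ← hw]
        ring_nf
    _ = ∑ k, w k * ‖Cu k‖ ^ 2 := by
        rw [Finset.sum_comm]
        simp_rw [← real_inner_self_eq_norm_sq, Cu, sum_inner, real_inner_smul_left, Finset.mul_sum]
        ring_nf

end WeightedIdempotent

section MixC

variable {n : ℕ} {Y : Fin n → ℝ}

theorem mixC_apply_of_sum_eq_one (hY : ∑ i, Y i = 1) (k l : Fin n) :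
    mixC Y k l = (1 : Matrix (Fin n) (Fin n) ℝ) k l - Y k := by
  by_cases h : k = l
  · subst h
    simp [mixC, hY]
  · simp [mixC, h]

theorem isIdempotentElem_mixC (hY : ∑ i, Y i = 1) : IsIdempotentElem (mixC Y) := by
  ext k l
  simp [Matrix.mul_apply, mixC_apply_of_sum_eq_one hY, Matrix.one_apply, sub_mul, mul_sub,
    Finset.sum_sub_distrib, ← Finset.mul_sum, hY]

theorem mul_mixC_comm_of_mul_eq_const {w : Fin n → ℝ} {c : ℝ}
    (hw : ∀ k, w k * Y k = c) (k l : Fin n) : w k * mixC Y k l = w l * mixC Y l k := by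
  by_cases h : k = l
  · rw [h]
  · simp [mixC, h, Ne.symm h, hw]

end MixC

noncomputable def DhatOf {n : ℕ} (m a : Fin n → ℝ) : Matrix (Fin n) (Fin n) ℝ :=
  Matrix.of fun k l =>
    mixC (fun i => m i * a i / ∑ j, m j * a j) k l * a l / ((∑ j, a j) * m k)

theorem Dhat_eq_DhatOf {n : ℕ} (m r : Fin n → ℝ) {θ : ℝ} (hθ : θ ≠ 0) :
    Dhat m r θ = DhatOf m fun i => Real.exp (r i) := by
  ext k l
  simp only [Dhat, DhatOf, Matrix.of_apply, mul_assoc θ]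
  exact mul_div_mul_left _ _ hθ

theorem sum_DhatOf_mul_inner {n : ℕ} [NeZero n] {E : Type*} [NormedAddCommGroup E]
    [InnerProductSpace ℝ E] {m a : Fin n → ℝ} (hm : ∀ k, 0 < m k) (ha : ∀ k, 0 < a k)
    (v : Fin n → E) :
    ∑ k, ∑ l, DhatOf m a k l * ⟪v k, v l⟫
      = ∑ k, (m k * (∑ j, a j) / a k) * ‖∑ l, DhatOf m a k l • v l‖ ^ 2 := by
  set S := ∑ j, a j
  set ρ := ∑ j, m j * a j
  set Y : Fin n → ℝ := fun i => m i * a i / ρ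
  have hS : 0 < S := Finset.sum_pos (fun j _ => ha j) Finset.univ_nonempty
  have hρ : 0 < ρ := Finset.sum_pos (fun j _ => mul_pos (hm j) (ha j)) Finset.univ_nonempty
  have hY : ∑ i, Y i = 1 := by
    simp only [Y, ← Finset.sum_div]
    exact div_self hρ.ne'
  set w : Fin n → ℝ := fun k => (S * m k * a k)⁻¹
  have hwY : ∀ k, w k * Y k = (S * ρ)⁻¹ := fun k => by
    have := (hm k).ne'; have := (ha k).ne'
    simp only [w, Y]
    field_simp
  set u : Fin n → E := fun l => a l • v l
  have hD : ∀ k, ∑ l, DhatOf m a k l • v l = (S * m k)⁻¹ • ∑ l, mixC Y k l • u l := fun k => by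
    simp only [DhatOf, Matrix.of_apply, Finset.smul_sum, smul_smul, u]
    congr! 2
    ring
  calc ∑ k, ∑ l, DhatOf m a k l * ⟪v k, v l⟫
      = ∑ k, ⟪v k, ∑ l, DhatOf m a k l • v l⟫ := by
        simp_rw [inner_sum, real_inner_smul_right]
    _ = ∑ k, w k * ⟪u k, ∑ l, mixC Y k l • u l⟫ := by
        refine Finset.sum_congr rfl fun k _ => ?_
        rw [hD, real_inner_smul_right, real_inner_smul_left]
        have := (hm k).ne'; have := (ha k).ne'
        simp only [w]
        field_simp
    _ = ∑ k, w k * ‖∑ l, mixC Y k l • u l‖ ^ 2 :=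
        sum_mul_inner_eq_sum_mul_norm_sq_of_isIdempotentElem (isIdempotentElem_mixC hY)
          (mul_mixC_comm_of_mul_eq_const hwY) u
    _ = ∑ k, (m k * S / a k) * ‖∑ l, DhatOf m a k l • v l‖ ^ 2 := by
        refine Finset.sum_congr rfl fun k _ => ?_
        rw [hD, norm_smul, mul_pow, Real.norm_eq_abs,
          abs_of_pos (inv_pos.mpr (mul_pos hS (hm k)))]
        have := (hm k).ne'; have := (ha k).ne'
        simp only [w]
        field_simp

/-- The entropy-dissipation quadratic form of `D̂` is a weighted sum of squares of
the diffusion fluxes: `∑_{k,l} D̂_{kl} ⟨v_k,v_l⟩ = ∑_k (m_k ∑_j a_j / a_k) ‖∑_l D̂_{kl} v_l‖²`;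
equivalently, with `F_k = -C₀ m_k ∑_l D̂_{kl} v_l`,
`C₀ ∑_{k,l} D̂_{kl} ⟨v_k,v_l⟩ = (π_m/(C₀θ)) ∑_k ‖F_k‖²/(m_k a_k)`. -/
theorem stmt6 {n : ℕ} (hn : 1 ≤ n) (m r : Fin n → ℝ)
    (hm : ∀ k, 0 < m k) (θ : ℝ) (hθ : 0 < θ) :
    (∀ v : Fin n → EuclideanSpace ℝ (Fin 3),
        ∑ k, ∑ l, Dhat m r θ k l * ⟪v k, v l⟫
          = ∑ k, (m k * (∑ j, Real.exp (r j)) / Real.exp (r k))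
              * ‖∑ l, Dhat m r θ k l • v l‖ ^ 2) ∧
      ∀ C₀ : ℝ, 0 < C₀ → ∀ v : Fin n → EuclideanSpace ℝ (Fin 3),
        C₀ * ∑ k, ∑ l, Dhat m r θ k l * ⟪v k, v l⟫
          = ((θ * ∑ j, Real.exp (r j)) / (C₀ * θ))
              * ∑ k, ‖(-(C₀ * m k)) • ∑ l, Dhat m r θ k l • v l‖ ^ 2
                  / (m k * Real.exp (r k)) := by
  have : NeZero n := ⟨by omega⟩
  have hform : ∀ v : Fin n → EuclideanSpace ℝ (Fin 3),
      ∑ k, ∑ l, Dhat m r θ k l * ⟪v k, v l⟫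
        = ∑ k, (m k * (∑ j, Real.exp (r j)) / Real.exp (r k))
            * ‖∑ l, Dhat m r θ k l • v l‖ ^ 2 := fun v => by
    simpa only [Dhat_eq_DhatOf m r hθ.ne'] using
      sum_DhatOf_mul_inner hm (fun k => Real.exp_pos (r k)) v
  refine ⟨hform, fun C₀ hC₀ v => ?_⟩
  rw [hform v, Finset.mul_sum, Finset.mul_sum]
  refine Finset.sum_congr rfl fun k _ => ?_
  rw [norm_smul, mul_pow, Real.norm_eq_abs, abs_neg, abs_of_pos (mul_pos hC₀ (hm k))]
  have := (hm k).ne'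
  field_simp
end
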